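/- Let G be a finite simple graph such that both G and its line graph L(G) have no isolated vertices. Let A be the adjacency matrix of G over ℝ, let H⁽⁰¹⁾ ∈ ℝ^{V(G) × E(G)} be the incidence matrix of G, let H⁽¹²⁾ ∈ ℝ^{V(L(G)) × E(L(G))} be the incidence matrix of L(G) (note V(L(G)) = E(G)), and set H⁽²⁾ = H⁽⁰¹⁾ · H⁽¹²⁾. Then for all vertices u, v of G: ((A + I)²)_{uv} > 0 if and only if (H⁽²⁾ (H⁽²⁾)ᵀ)_{uv} > 0. (This is the m = 2 case of the paper's Lemma 1.) -/
import Mathlib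


open Matrix
open scoped Classical

/-- The incidence matrix of a simple graph `G`, indexed by vertices and edges:
the entry at `(v, e)` is `1` if `v` is an endpoint of `e`, and `0` otherwise. -/
noncomputable def edgeIncMatrix {V : Type*} (G : SimpleGraph V) : Matrix V G.edgeSet ℝ :=
  fun v e => if v ∈ (e : Sym2 V) then 1 else 0

private lemma sum_pos_iff_aux {ι : Type*} [Fintype ι] (f : ι → ℝ) (h : ∀ i, 0 ≤ f i) :
    0 < ∑ i, f i ↔ ∃ i, 0 < f i := by
  constructor
  · intro hp
    by_contra hc
    push_neg at hc
    have : ∑ i, f i = 0 := Finset.sum_eq_zero fun i _ => le_antisymm (hc i) (h i)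
    rw [this] at hp
    exact lt_irrefl 0 hp
  · rintro ⟨i, hi⟩
    exact Finset.sum_pos' (fun j _ => h j) ⟨i, Finset.mem_univ i, hi⟩

private lemma mem_mem_edge_aux {V : Type*} {G : SimpleGraph V} (e : G.edgeSet) {a b : V}
    (ha : a ∈ (e : Sym2 V)) (hb : b ∈ (e : Sym2 V)) : a = b ∨ G.Adj a b := by
  obtain ⟨e, he⟩ := e
  induction e with
  | _ x y =>
    rw [SimpleGraph.mem_edgeSet] at he
    simp only [Sym2.mem_iff] at ha hb
    rcases ha with rfl | rfl <;> rcases hb with rfl | rfl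
    · exact Or.inl rfl
    · exact Or.inr he
    · exact Or.inr he.symm
    · exact Or.inl rfl

/-- Let `G` be a finite simple graph such that both `G` and its line graph `L(G)` have no
isolated vertices.  Let `H⁽⁰¹⁾` be the incidence matrix of `G`, `H⁽¹²⁾` the incidence matrix
of `L(G)`, and `H⁽²⁾ = H⁽⁰¹⁾ * H⁽¹²⁾`.  Then for all vertices `u v` of `G`,
`((A + I)²) u v > 0 ↔ (H⁽²⁾ * (H⁽²⁾)ᵀ) u v > 0` (the `m = 2` case of the paper's Lemma 1). -/
theorem adj_add_one_sq_pos_iff_iterated_incidence_pos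
    {V : Type*} [Fintype V] [DecidableEq V] (G : SimpleGraph V) [DecidableRel G.Adj]
    (hG : ∀ v : V, ∃ w, G.Adj v w)
    (hLG : ∀ e : G.edgeSet, ∃ f, G.lineGraph.Adj e f)
    (u v : V) :
    0 < (((G.adjMatrix ℝ + 1) ^ 2 : Matrix V V ℝ)) u v ↔
      0 < ((edgeIncMatrix G * edgeIncMatrix G.lineGraph) *
            (edgeIncMatrix G * edgeIncMatrix G.lineGraph)ᵀ) u v := by
  set M : Matrix V G.lineGraph.edgeSet ℝ := edgeIncMatrix G * edgeIncMatrix G.lineGraph with hM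
  -- nonnegativity and positivity characterization of `M`
  have hMentry : ∀ (w : V) (F : G.lineGraph.edgeSet),
      M w F = ∑ e : G.edgeSet,
        (if w ∈ (e : Sym2 V) then (1 : ℝ) else 0) *
        (if e ∈ (F : Sym2 G.edgeSet) then (1 : ℝ) else 0) := by
    intro w F
    rw [hM, Matrix.mul_apply]
    refine Finset.sum_congr rfl fun e _ => ?_
    simp only [edgeIncMatrix]
    split_ifs <;> norm_num
  have hMnonneg : ∀ (w : V) (F : G.lineGraph.edgeSet), 0 ≤ M w F := by
    intro w F
    rw [hMentry]
    refine Finset.sum_nonneg fun e _ => ?_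
    split_ifs <;> norm_num
  have hMpos : ∀ (w : V) (F : G.lineGraph.edgeSet),
      0 < M w F ↔ ∃ e : G.edgeSet, w ∈ (e : Sym2 V) ∧ e ∈ (F : Sym2 G.edgeSet) := by
    intro w F
    rw [hMentry, sum_pos_iff_aux]
    · refine exists_congr fun e => ?_
      split_ifs with h1 h2 <;> simp_all
    · intro e
      split_ifs <;> norm_num
  -- positivity characterization of `A + 1`
  have hB : ∀ a b : V, 0 ≤ (G.adjMatrix ℝ + 1) a b := by
    intro a b
    simp only [Matrix.add_apply, SimpleGraph.adjMatrix_apply, Matrix.one_apply]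
    split_ifs <;> norm_num
  have hBpos : ∀ a b : V, 0 < (G.adjMatrix ℝ + 1) a b ↔ (G.Adj a b ∨ a = b) := by
    intro a b
    simp only [Matrix.add_apply, SimpleGraph.adjMatrix_apply, Matrix.one_apply]
    by_cases hab : G.Adj a b <;> by_cases heq : a = b <;> simp [hab, heq]
  -- rewrite both sides
  rw [sq, Matrix.mul_apply, Matrix.mul_apply]
  simp only [Matrix.transpose_apply]
  rw [sum_pos_iff_aux _ (fun w => mul_nonneg (hB u w) (hB w v)),
    sum_pos_iff_aux _ (fun F => mul_nonneg (hMnonneg u F) (hMnonneg v F))]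
  have hmulpos : ∀ x y : ℝ, 0 ≤ x → 0 ≤ y → (0 < x * y ↔ 0 < x ∧ 0 < y) := by
    intro x y hx hy
    constructor
    · intro h
      constructor
      · rcases hx.lt_or_eq with h' | h'
        · exact h'
        · rw [← h', zero_mul] at h; exact absurd h (lt_irrefl 0)
      · rcases hy.lt_or_eq with h' | h'
        · exact h'
        · rw [← h', mul_zero] at h; exact absurd h (lt_irrefl 0)
    · rintro ⟨h1, h2⟩; exact mul_pos h1 h2
  have rhs_of_edge : ∀ e : G.edgeSet, u ∈ (e : Sym2 V) → v ∈ (e : Sym2 V) →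
      ∃ F : G.lineGraph.edgeSet, 0 < M u F * M v F := by
    intro e hu hv
    obtain ⟨f, hadj⟩ := hLG e
    refine ⟨⟨s(e, f), (G.lineGraph.mem_edgeSet).2 hadj⟩, ?_⟩
    rw [hmulpos _ _ (hMnonneg u _) (hMnonneg v _), hMpos, hMpos]
    exact ⟨⟨e, hu, Sym2.mem_mk_left e f⟩, ⟨e, hv, Sym2.mem_mk_left e f⟩⟩
  constructor
  · rintro ⟨w, hw⟩
    rw [hmulpos _ _ (hB u w) (hB w v), hBpos, hBpos] at hw
    obtain ⟨h1, h2⟩ := hw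
    rcases h1 with h1 | h1
    · rcases h2 with h2 | h2
      · -- u ~ w ~ v
        set e : G.edgeSet := ⟨s(u, w), (G.mem_edgeSet).2 h1⟩ with he
        set f : G.edgeSet := ⟨s(w, v), (G.mem_edgeSet).2 h2⟩ with hf
        by_cases hef : e = f
        · refine rhs_of_edge e (Sym2.mem_mk_left u w) ?_
          rw [hef]
          exact Sym2.mem_mk_right w v
        · have hadj : G.lineGraph.Adj e f := by
            rw [SimpleGraph.lineGraph_adj_iff_exists]
            exact ⟨hef, w, by simp [he], by simp [hf]⟩
          refine ⟨⟨s(e, f), (G.lineGraph.mem_edgeSet).2 hadj⟩, ?_⟩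
          rw [hmulpos _ _ (hMnonneg u _) (hMnonneg v _), hMpos, hMpos]
          exact ⟨⟨e, Sym2.mem_mk_left u w, Sym2.mem_mk_left e f⟩,
                 ⟨f, Sym2.mem_mk_right w v, Sym2.mem_mk_right e f⟩⟩
      · -- u ~ w, w = v
        refine rhs_of_edge ⟨s(u, w), (G.mem_edgeSet).2 h1⟩ (Sym2.mem_mk_left u w) ?_
        rw [← h2]
        exact Sym2.mem_mk_right u w
    · rcases h2 with h2 | h2
      · -- u = w, w ~ v
        refine rhs_of_edge ⟨s(w, v), (G.mem_edgeSet).2 h2⟩ ?_ (Sym2.mem_mk_right w v)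
        rw [h1]
        exact Sym2.mem_mk_left w v
      · -- u = v
        obtain ⟨x, hx⟩ := hG u
        refine rhs_of_edge ⟨s(u, x), (G.mem_edgeSet).2 hx⟩ (Sym2.mem_mk_left u x) ?_
        rw [← h2, ← h1]
        exact Sym2.mem_mk_left u x
  · rintro ⟨F, hF⟩
    rw [hmulpos _ _ (hMnonneg u _) (hMnonneg v _), hMpos, hMpos] at hF
    obtain ⟨⟨e, hue, heF⟩, ⟨f, hvf, hfF⟩⟩ := hF
    by_cases hef : e = f
    · -- u, v in the same edge
      subst hef
      refine ⟨u, ?_⟩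
      rw [hmulpos _ _ (hB u u) (hB u v), hBpos, hBpos]
      refine ⟨Or.inr rfl, ?_⟩
      rcases mem_mem_edge_aux e hue hvf with h | h
      · exact Or.inr h
      · exact Or.inl h
    · -- F = s(e, f), so e and f are adjacent edges sharing some vertex w
      have hFval : (F : Sym2 G.edgeSet) = s(e, f) :=
        (Sym2.mem_and_mem_iff hef).1 ⟨heF, hfF⟩
      have hadj : G.lineGraph.Adj e f := by
        have hF2 := F.2
        rw [hFval, SimpleGraph.mem_edgeSet] at hF2
        exact hF2
      rw [SimpleGraph.lineGraph_adj_iff_exists] at hadj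
      obtain ⟨-, w, hwe, hwf⟩ := hadj
      refine ⟨w, ?_⟩
      rw [hmulpos _ _ (hB u w) (hB w v), hBpos, hBpos]
      constructor
      · rcases mem_mem_edge_aux e hue hwe with h | h
        · exact Or.inr h
        · exact Or.inl h
      · rcases mem_mem_edge_aux f hwf hvf with h | h
        · exact Or.inr h
        · exact Or.inl h
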